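/- Let CB(L) be the collection of nonempty closed bounded convex subsets of a Banach space L. The relation (A,B) ∼ (C,D) if and only if closure(A + D) = closure(B + C) is an equivalence relation on CB(L) × CB(L). -/

import Mathlib

/-!
Reflexivity and symmetry are commutativity of `+`. For transitivity, adding `C + D` to both
sides turns the hypotheses into `closure (A + F + (C + D)) = closure (B + E + (C + D))`, and
Rådström's cancellation law removes the bounded summand `C + D`: if `x + S ⊆ closure (Y + S)`
with `Y` closed convex and `S` bounded, then iterating `x + S ⊆ Y_ε + S` (with `Y_ε` the
`ε`-thickening of `Y`) gives `n • x + S ⊆ n • Y_ε + S = (n : ℝ) • Y_ε + S` by convexity, so `x`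
lies within `ε + diam S / n` of `Y` for every `n`.
-/

open Pointwise Set Metric

theorem closure_add_closure_subset {M : Type*} [TopologicalSpace M] [Add M] [ContinuousAdd M]
    (s t : Set M) : closure s + closure t ⊆ closure (s + t) := by
  rintro _ ⟨a, ha, b, hb, rfl⟩
  exact map_mem_closure₂ continuous_add ha hb fun a ha b hb => add_mem_add ha hb

theorem closure_closure_add_closure {M : Type*} [TopologicalSpace M] [Add M] [ContinuousAdd M]
    (s t : Set M) : closure (closure s + closure t) = closure (s + t) :=
  (closure_minimal (closure_add_closure_subset s t) isClosed_closure).antisymm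
    (closure_mono (add_subset_add subset_closure subset_closure))

theorem Set.nsmul_add_subset_nsmul_add {M : Type*} [AddCommMonoid M] {A B S : Set M}
    (h : A + S ⊆ B + S) : ∀ n : ℕ, n • A + S ⊆ n • B + S
  | 0 => subset_rfl
  | n + 1 => calc
      (n + 1) • A + S = n • A + (A + S) := by rw [succ_nsmul, add_assoc]
      _ ⊆ n • A + (B + S) := add_subset_add_left h
      _ = B + (n • A + S) := by rw [add_left_comm]
      _ ⊆ B + (n • B + S) := add_subset_add_left (nsmul_add_subset_nsmul_add h n)
      _ = (n + 1) • B + S := by rw [succ_nsmul', add_assoc]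

theorem Convex.nsmul_eq_smul {𝕜 E : Type*} [Field 𝕜] [LinearOrder 𝕜] [IsStrictOrderedRing 𝕜]
    [AddCommGroup E] [Module 𝕜 E] {s : Set E} (hs : Convex 𝕜 s) {n : ℕ} (hn : n ≠ 0) :
    n • s = (n : 𝕜) • s := by
  induction n with
  | zero => exact absurd rfl hn
  | succ n ih =>
    rcases eq_or_ne n 0 with rfl | hn'
    · simp
    rw [succ_nsmul, ih hn', Nat.cast_succ, hs.add_smul n.cast_nonneg zero_le_one, one_smul]

theorem Metric.thickening_add {E : Type*} [SeminormedAddCommGroup E]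
    (δ : ℝ) (s t : Set E) : thickening δ (s + t) = thickening δ s + t := by
  rw [← add_ball_zero, ← add_ball_zero, add_right_comm]

theorem Convex.subset_of_add_subset_closure_add {E : Type*} [NormedAddCommGroup E]
    [NormedSpace ℝ E] {X Y S : Set E} (hY : Convex ℝ Y) (hYc : IsClosed Y) (hS : S.Nonempty)
    (hSb : Bornology.IsBounded S) (h : X + S ⊆ closure (Y + S)) : X ⊆ Y := by
  intro x hx
  rw [← hYc.closure_eq, Metric.mem_closure_iff]
  intro ε hε
  obtain ⟨C, hC⟩ := isBounded_iff.mp hSb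
  obtain ⟨s₀, hs₀⟩ := hS
  have hC0 : 0 ≤ C := dist_nonneg.trans (hC hs₀ hs₀)
  obtain ⟨n, hn⟩ := exists_nat_gt (2 * C / ε)
  have hn0 : (0 : ℝ) < n := (div_nonneg (by positivity) hε.le).trans_lt hn
  have hx_thick : {x} + S ⊆ Metric.thickening (ε / 2) Y + S := by
    rw [← thickening_add]
    exact (add_subset_add_right (singleton_subset_iff.2 hx)).trans
      (h.trans (closure_subset_thickening (by positivity) _))
  have hnx_thick := nsmul_add_subset_nsmul_add hx_thick n
  rw [nsmul_singleton, (hY.thickening (ε / 2)).nsmul_eq_smul (by exact_mod_cast hn0.ne')] at hnx_thick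
  obtain ⟨_, ⟨z, hz, rfl⟩, s, hs, hzs⟩ := hnx_thick (add_mem_add rfl hs₀)
  obtain ⟨y, hy, hzy⟩ := mem_thickening_iff.1 hz
  have hxz : dist x z ≤ C / n := by
    have : (n : ℝ) • (x - z) = s - s₀ := by
      simp only at hzs
      rw [smul_sub, Nat.cast_smul_eq_nsmul, sub_eq_sub_iff_add_eq_add, ← hzs, add_comm]
    rw [dist_eq_norm, le_div_iff₀ hn0, mul_comm, ← Real.norm_natCast, ← norm_smul, this,
      ← dist_eq_norm]
    exact hC hs hs₀
  have hCn : C / n < ε / 2 := by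
    rw [div_lt_iff₀ hn0]
    rw [div_lt_iff₀ hε] at hn
    linarith
  refine ⟨y, hy, ?_⟩
  calc dist x y ≤ dist x z + dist z y := dist_triangle _ _ _
    _ < ε / 2 + ε / 2 := add_lt_add_of_le_of_lt (hxz.trans hCn.le) hzy
    _ = ε := add_halves ε

theorem closure_eq_of_closure_add_eq {E : Type*} [NormedAddCommGroup E] [NormedSpace ℝ E]
    {X Y S : Set E} (hX : Convex ℝ X) (hY : Convex ℝ Y) (hS : S.Nonempty)
    (hSb : Bornology.IsBounded S) (h : closure (X + S) = closure (Y + S)) :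
    closure X = closure Y := by
  have closure_subset : ∀ {X Y : Set E}, Convex ℝ Y → closure (X + S) = closure (Y + S) →
      closure X ⊆ closure Y := fun hY h ↦
    closure_minimal (hY.closure.subset_of_add_subset_closure_add isClosed_closure hS hSb <|
      subset_closure.trans <| h ▸ closure_mono (add_subset_add_right subset_closure))
      isClosed_closure
  exact (closure_subset hY h).antisymm (closure_subset hX h.symm)

theorem radstrom_relation_equivalence_general {L : Type*} [NormedAddCommGroup L]
    [NormedSpace ℝ L] :
    Equivalence (fun p q : {A : Set L // A.Nonempty ∧ IsClosed A ∧
        Bornology.IsBounded A ∧ Convex ℝ A} ×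
        {A : Set L // A.Nonempty ∧ IsClosed A ∧ Bornology.IsBounded A ∧ Convex ℝ A} =>
      closure ((p.1 : Set L) + (q.2 : Set L)) =
        closure ((p.2 : Set L) + (q.1 : Set L))) := by
  refine ⟨fun _ ↦ by rw [add_comm], fun h ↦ by rw [add_comm, ← h, add_comm], ?_⟩
  rintro ⟨⟨A, _, _, _, hA⟩, ⟨B, _, _, _, hB⟩⟩ ⟨⟨C, hCne, _, hCb, _⟩, ⟨D, hDne, _, hDb, _⟩⟩
    ⟨⟨E, _, _, _, hE⟩, ⟨F, _, _, _, hF⟩⟩ h₁ h₂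
  refine closure_eq_of_closure_add_eq (hA.add hF) (hB.add hE) (hCne.add hDne) (hCb.add hDb) ?_
  calc closure (A + F + (C + D)) = closure ((A + D) + (C + F)) := by congr 1; abel
    _ = closure (closure (A + D) + closure (C + F)) := (closure_closure_add_closure _ _).symm
    _ = closure (closure (B + C) + closure (D + E)) := by rw [h₁, h₂]
    _ = closure ((B + C) + (D + E)) := closure_closure_add_closure _ _
    _ = closure (B + E + (C + D)) := by congr 1; abel

/-- On `CB(L) × CB(L)`, where `CB(L)` is the collection of nonempty closed bounded
convex subsets of a Banach space `L`, the relation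
`(A,B) ∼ (C,D) ↔ closure (A + D) = closure (B + C)` is an equivalence relation. -/
theorem radstrom_relation_equivalence {L : Type*} [NormedAddCommGroup L]
    [NormedSpace ℝ L] [CompleteSpace L] :
    Equivalence (fun p q : {A : Set L // A.Nonempty ∧ IsClosed A ∧
        Bornology.IsBounded A ∧ Convex ℝ A} ×
        {A : Set L // A.Nonempty ∧ IsClosed A ∧ Bornology.IsBounded A ∧ Convex ℝ A} =>
      closure ((p.1 : Set L) + (q.2 : Set L)) =
        closure ((p.2 : Set L) + (q.1 : Set L))) :=
  radstrom_relation_equivalence_general
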